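/- arXiv:1604.02678 — 2 statements merged into one kernel-verified Lean document; each statement's English description precedes it below -/
import Mathlib

section
/- Let f : X → X be a homeomorphism of a locally compact separable metric space (X, d), where d is the restriction of a metric on the one-point compactification X̃. If f is expansive, then f has a generator. -/
section

variable {X : Type*} [MetricSpace X]

/-- `e` (a homeomorphism) is expansive: there is `δ > 0` such that distinct points
are separated by more than `δ` under some iterate `f^n`, `n ∈ ℤ`. -/
def IsExpansiveHomeo (e : X ≃ X) : Prop :=
  ∃ δ : ℝ, 0 < δ ∧ ∀ x y : X, x ≠ y → ∃ n : ℤ, δ < dist ((e ^ n) x) ((e ^ n) y)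

/-- `e` has a generator: a finite cover of `X` by admissible open sets (closure or
complement compact) such that `⋂ n : ℤ, f⁻ⁿ(cl (α (A n)))` has at most one point
for every bisequence `A` from the cover. -/
def HasGenerator (e : X ≃ X) : Prop :=
  ∃ (k : ℕ) (α : Fin k → Set X),
    ((∀ i, IsOpen (α i)) ∧ (∀ i, IsCompact (closure (α i)) ∨ IsCompact (α i)ᶜ) ∧
      (⋃ i, α i) = Set.univ) ∧
    ∀ A : ℤ → Fin k, (⋂ n : ℤ, (⇑(e ^ n)) ⁻¹' closure (α (A n))).Subsingleton

/-!
A metric on the one-point compactification `X̃` that extends `d` makes `X̃` a compact metric space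
containing `X` isometrically. Cover `X̃` by finitely many balls: one of radius `δ/2` around `∞`, the
others of radius `δ/4` centred at least `δ/2` away from `∞`. Their traces on `X` are admissible (the
first has compact complement, the closures of the others avoid `∞`) and their closures have diameter
at most `δ`, so for an expansive constant `δ` no two distinct points can share an itinerary.
-/

open Metric Set

def IsAdmissibleOpenCover {ι : Type*} (α : ι → Set X) : Prop :=
  (∀ i, IsOpen (α i)) ∧ (∀ i, IsCompact (closure (α i)) ∨ IsCompact (α i)ᶜ) ∧ ⋃ i, α i = univ

theorem IsAdmissibleOpenCover.comp_equiv {ι ι' : Type*} {α : ι → Set X}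
    (hα : IsAdmissibleOpenCover α) (σ : ι' ≃ ι) : IsAdmissibleOpenCover (α ∘ σ) :=
  ⟨fun i => hα.1 (σ i), fun i => hα.2.1 (σ i), by
    rw [← hα.2.2]; exact σ.surjective.iUnion_comp α⟩

theorem hasGenerator_of_isAdmissibleOpenCover {ι : Type*} [Finite ι] {e : X ≃ X} {δ : ℝ}
    (hexp : ∀ x y : X, x ≠ y → ∃ n : ℤ, δ < dist ((e ^ n) x) ((e ^ n) y))
    {α : ι → Set X} (hα : IsAdmissibleOpenCover α)
    (hsmall : ∀ i, ∀ x ∈ closure (α i), ∀ y ∈ closure (α i), dist x y ≤ δ) :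
    HasGenerator e := by
  obtain ⟨k, ⟨σ⟩⟩ := Finite.exists_equiv_fin ι
  refine ⟨k, α ∘ σ.symm, hα.comp_equiv σ.symm, fun A x hx y hy => ?_⟩
  by_contra hxy
  obtain ⟨n, hn⟩ := hexp x y hxy
  exact hn.not_ge (hsmall _ _ (mem_iInter.1 hx n) _ (mem_iInter.1 hy n))

theorem closure_preimage_ball_subset {Y : Type*} [PseudoMetricSpace Y] {f : X → Y}
    (hf : Continuous f) (c : Y) (ρ : ℝ) : closure (f ⁻¹' ball c ρ) ⊆ f ⁻¹' closedBall c ρ :=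
  (hf.closure_preimage_subset _).trans (preimage_mono closure_ball_subset_closedBall)

namespace Isometry

variable {Y : Type*} [MetricSpace Y] {f : X → Y}

theorem dist_le_of_mem_closure_preimage_ball (hf : Isometry f) {c : Y} {ρ : ℝ} {x y : X}
    (hx : x ∈ closure (f ⁻¹' ball c ρ)) (hy : y ∈ closure (f ⁻¹' ball c ρ)) :
    dist x y ≤ 2 * ρ := by
  have hxc : dist (f x) c ≤ ρ := closure_preimage_ball_subset hf.continuous c ρ hx
  have hyc : dist (f y) c ≤ ρ := closure_preimage_ball_subset hf.continuous c ρ hy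
  calc dist x y = dist (f x) (f y) := (hf.dist_eq x y).symm
    _ ≤ dist (f x) c + dist (f y) c := dist_triangle_right _ _ _
    _ ≤ 2 * ρ := by linarith

variable [CompactSpace Y] {p : Y}

theorem isCompact_preimage_of_notMem (hf : Isometry f) (hp : ∀ y, y ≠ p → y ∈ range f)
    {S : Set Y} (hS : IsClosed S) (hpS : p ∉ S) : IsCompact (f ⁻¹' S) :=
  hf.isEmbedding.isInducing.isCompact_preimage' hS.isCompact
    fun y hy => hp y (ne_of_mem_of_not_mem hy hpS)

theorem hasGenerator_of_isExpansiveHomeo (hf : Isometry f) (hp : ∀ y, y ≠ p → y ∈ range f)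
    {e : X ≃ X} (hexp : IsExpansiveHomeo e) : HasGenerator e := by
  obtain ⟨δ, hδ, hexp⟩ := hexp
  obtain ⟨t, htfar, htfin, htcover⟩ :=
    finite_cover_balls_of_compact (isOpen_ball (x := p) (ε := δ / 2)).isClosed_compl.isCompact
      (by positivity : 0 < δ / 4)
  have : Finite t := htfin
  let α : Option t → Set X := fun o => f ⁻¹' o.elim (ball p (δ / 2)) fun c => ball (c : Y) (δ / 4)
  refine hasGenerator_of_isAdmissibleOpenCover (α := α) hexp ⟨?_, ?_, ?_⟩ ?_
  · rintro (_ | c) <;> exact isOpen_ball.preimage hf.continuous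
  · rintro (_ | ⟨c, hc⟩)
    · refine .inr (hf.isCompact_preimage_of_notMem hp isOpen_ball.isClosed_compl ?_)
      simpa using half_pos hδ
    · refine .inl ((hf.isCompact_preimage_of_notMem hp isClosed_closedBall ?_).of_isClosed_subset
        isClosed_closure (closure_preimage_ball_subset hf.continuous c (δ / 4)))
      have hcp : δ / 2 ≤ dist c p := by simpa [dist_comm] using htfar hc
      simp only [mem_closedBall, dist_comm p, not_le]
      linarith
  · refine eq_univ_of_forall fun x => ?_
    by_cases hx : f x ∈ ball p (δ / 2)
    · exact mem_iUnion.2 ⟨none, hx⟩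
    · obtain ⟨c, hc, hxc⟩ := mem_iUnion₂.1 (htcover hx)
      exact mem_iUnion.2 ⟨some ⟨c, hc⟩, hxc⟩
  · rintro (_ | c) x hx y hy <;>
      exact (hf.dist_le_of_mem_closure_preimage_ball hx hy).trans (by linarith)

end Isometry

theorem hasGenerator_of_expansive_general
    (m : MetricSpace (OnePoint X))
    (hcompat : m.toUniformSpace.toTopologicalSpace =
      (inferInstance : TopologicalSpace (OnePoint X)))
    (hrestrict : ∀ x y : X,
      @dist _ m.toPseudoMetricSpace.toDist (x : OnePoint X) (y : OnePoint X) = dist x y)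
    (e : X ≃ X) (hexp : IsExpansiveHomeo e) :
    HasGenerator e := by
  have hcompact : @CompactSpace (OnePoint X) m.toUniformSpace.toTopologicalSpace := by
    rw [hcompat]; infer_instance
  have hisom : @Isometry X (OnePoint X) _ m.toPseudoEMetricSpace (↑) :=
    @Isometry.of_dist_eq X (OnePoint X) _ m.toPseudoMetricSpace _ hrestrict
  exact @Isometry.hasGenerator_of_isExpansiveHomeo X _ (OnePoint X) m (↑) hcompact
    OnePoint.infty hisom (fun _ => OnePoint.ne_infty_iff_exists.1) e hexp

/-- Let `f : X → X` be a homeomorphism of a locally compact separable metric space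
`(X, d)`, where `d` is the restriction of a metric on the one-point
compactification `X̃`. If `f` is expansive then `f` has a generator. -/
theorem hasGenerator_of_expansive
    [LocallyCompactSpace X] [TopologicalSpace.SeparableSpace X]
    (m : MetricSpace (OnePoint X))
    (hcompat : m.toUniformSpace.toTopologicalSpace =
      (inferInstance : TopologicalSpace (OnePoint X)))
    (hrestrict : ∀ x y : X,
      @dist _ m.toPseudoMetricSpace.toDist (x : OnePoint X) (y : OnePoint X) = dist x y)
    (e : X ≃ X) (hc : Continuous e) (hc' : Continuous e.symm)
    (hexp : IsExpansiveHomeo e) :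
    HasGenerator e :=
  hasGenerator_of_expansive_general m hcompat hrestrict e hexp

end
end

section
/- Let f : X → X be a homeomorphism of a locally compact separable metric space (X, d), where d is the restriction of a metric on the one-point compactification X̃. If f has a generator, then f is expansive. -/
/-!
Compactify `X` by one point. A generator `α` extends to a finite open cover of the compact
metric space `X̃`: a member with compact complement picks up `∞`, the others stay as they are,
and at least one member has compact complement, since otherwise `X` would be compact. A Lebesgue
number `δ` of this cover is, because `d` is the restriction of the metric of `X̃`, a number such
that any two points of `X` at distance `< δ` lie in a common member of `α`. If the orbits of
`x ≠ y` stayed within `δ / 2` of each other, choosing such a common member at every time `n`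
would give a bisequence whose intersection contains both `x` and `y`.
-/

section

variable {X : Type*} [MetricSpace X]

open Set

theorem exists_isCompact_compl_of_iUnion_eq_univ {Y ι : Type*} [TopologicalSpace Y]
    [Nonempty Y] [Finite ι] {α : ι → Set Y} (hopen : ∀ i, IsOpen (α i))
    (hadm : ∀ i, IsCompact (closure (α i)) ∨ IsCompact (α i)ᶜ) (hcover : ⋃ i, α i = univ) :
    ∃ i, IsCompact (α i)ᶜ := by
  by_cases hclosure : ∀ i, IsCompact (closure (α i))
  · have : CompactSpace Y := by
      refine ⟨(isCompact_iUnion hclosure).of_isClosed_subset isClosed_univ ?_⟩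
      exact hcover ▸ iUnion_mono fun i => subset_closure
    obtain ⟨y⟩ := ‹Nonempty Y›
    obtain ⟨i, -⟩ := mem_iUnion.1 (hcover ▸ mem_univ y)
    exact ⟨i, (hopen i).isClosed_compl.isCompact⟩
  · obtain ⟨i, hi⟩ := not_forall.1 hclosure
    exact ⟨i, (hadm i).resolve_left hi⟩

namespace OnePoint

variable {Y : Type*} [TopologicalSpace Y]

noncomputable def extendAdmissible (U : Set Y) : Set (OnePoint Y) :=
  open Classical in if IsCompact Uᶜ then ((↑) '' Uᶜ)ᶜ else (↑) '' U

@[simp]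
theorem coe_mem_extendAdmissible {U : Set Y} {a : Y} :
    (a : OnePoint Y) ∈ extendAdmissible U ↔ a ∈ U := by
  unfold extendAdmissible
  split_ifs <;> simp [coe_injective.mem_set_image]

theorem isOpen_extendAdmissible {U : Set Y} (hU : IsOpen U) : IsOpen (extendAdmissible U) := by
  unfold extendAdmissible
  split_ifs with h
  · exact isOpen_compl_image_coe.2 ⟨hU.isClosed_compl, h⟩
  · exact isOpen_image_coe.2 hU

theorem infty_mem_extendAdmissible {U : Set Y} (h : IsCompact Uᶜ) : ∞ ∈ extendAdmissible U := by
  rw [extendAdmissible, if_pos h]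
  exact infty_notMem_image_coe

theorem iUnion_extendAdmissible_eq_univ {ι : Type*} [Nonempty Y] [Finite ι] {α : ι → Set Y}
    (hopen : ∀ i, IsOpen (α i)) (hadm : ∀ i, IsCompact (closure (α i)) ∨ IsCompact (α i)ᶜ)
    (hcover : ⋃ i, α i = univ) : ⋃ i, extendAdmissible (α i) = univ := by
  refine eq_univ_of_forall fun z => ?_
  induction z using OnePoint.rec with
  | infty =>
    obtain ⟨i, hi⟩ := exists_isCompact_compl_of_iUnion_eq_univ hopen hadm hcover
    exact mem_iUnion.2 ⟨i, infty_mem_extendAdmissible hi⟩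
  | coe a =>
    obtain ⟨i, hi⟩ := mem_iUnion.1 (hcover ▸ mem_univ a)
    exact mem_iUnion.2 ⟨i, coe_mem_extendAdmissible.2 hi⟩

end OnePoint

theorem lebesgue_number_lemma_of_compatible_metric {Y ι : Type*} [t : TopologicalSpace Y]
    [CompactSpace Y] (m : MetricSpace Y) (hm : m.toUniformSpace.toTopologicalSpace = t)
    {B : ι → Set Y} (hopen : ∀ i, IsOpen (B i)) (hcover : ⋃ i, B i = univ) :
    ∃ δ > 0, ∀ y z : Y, @dist _ m.toPseudoMetricSpace.toDist y z < δ →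
      ∃ i, y ∈ B i ∧ z ∈ B i := by
  subst hm
  obtain ⟨δ, hδ, hball⟩ := lebesgue_number_lemma_of_metric isCompact_univ hopen hcover.ge
  refine ⟨δ, hδ, fun y z hyz => ?_⟩
  obtain ⟨i, hi⟩ := hball y (mem_univ y)
  exact ⟨i, hi (Metric.mem_ball_self hδ), hi (Metric.mem_ball'.2 hyz)⟩

theorem isExpansiveHomeo_of_lebesgue_number {e : X ≃ X} {ι : Type*} {α : ι → Set X}
    (hsep : ∀ A : ℤ → ι, (⋂ n : ℤ, (⇑(e ^ n)) ⁻¹' closure (α (A n))).Subsingleton)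
    {δ : ℝ} (hδ : 0 < δ) (hleb : ∀ x y : X, dist x y < δ → ∃ i, x ∈ α i ∧ y ∈ α i) :
    IsExpansiveHomeo e := by
  refine ⟨δ / 2, half_pos hδ, fun x y hxy => ?_⟩
  by_contra! hclose
  choose A hxA hyA using fun n => hleb _ _ ((hclose n).trans_lt (half_lt_self hδ))
  exact hxy (hsep A (mem_iInter.2 fun n => subset_closure (hxA n))
    (mem_iInter.2 fun n => subset_closure (hyA n)))

theorem expansive_of_hasGenerator_general
    (m : MetricSpace (OnePoint X))
    (hcompat : m.toUniformSpace.toTopologicalSpace =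
      (inferInstance : TopologicalSpace (OnePoint X)))
    (hrestrict : ∀ x y : X,
      @dist _ m.toPseudoMetricSpace.toDist (x : OnePoint X) (y : OnePoint X) = dist x y)
    (e : X ≃ X)
    (hgen : HasGenerator e) :
    IsExpansiveHomeo e := by
  rcases isEmpty_or_nonempty X with hX | hX
  · exact ⟨1, one_pos, fun x => isEmptyElim x⟩
  obtain ⟨k, α, ⟨hopen, hadm, hcover⟩, hsep⟩ := hgen
  obtain ⟨δ, hδ, hleb⟩ := lebesgue_number_lemma_of_compatible_metric m hcompat
    (fun i => OnePoint.isOpen_extendAdmissible (hopen i))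
    (OnePoint.iUnion_extendAdmissible_eq_univ hopen hadm hcover)
  refine isExpansiveHomeo_of_lebesgue_number hsep hδ fun x y hxy => ?_
  simpa only [OnePoint.coe_mem_extendAdmissible] using hleb x y ((hrestrict x y).trans_lt hxy)

/-- Let `f : X → X` be a homeomorphism of a locally compact separable metric space
`(X, d)`, where `d` is the restriction of a metric on the one-point
compactification `X̃`. If `f` has a generator then `f` is expansive. -/
theorem expansive_of_hasGenerator
    [LocallyCompactSpace X] [TopologicalSpace.SeparableSpace X]
    (m : MetricSpace (OnePoint X))
    (hcompat : m.toUniformSpace.toTopologicalSpace =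
      (inferInstance : TopologicalSpace (OnePoint X)))
    (hrestrict : ∀ x y : X,
      @dist _ m.toPseudoMetricSpace.toDist (x : OnePoint X) (y : OnePoint X) = dist x y)
    (e : X ≃ X) (hc : Continuous e) (hc' : Continuous e.symm)
    (hgen : HasGenerator e) :
    IsExpansiveHomeo e :=
  expansive_of_hasGenerator_general m hcompat hrestrict e hgen

end
end
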